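/- Let X be a real-valued random variable and γ > 0. If there is a constant K > 0 such that P(|X| > t) ≤ 2 exp(-(t/K)^γ) for all t ≥ 0, then there is a constant C (depending only on γ) such that (E|X|^p)^{1/p} ≤ C·K·p^{1/γ} for all p ≥ max(1, γ). -/
import Mathlib


open MeasureTheory
open scoped ENNReal

lemma aux_tsum_rpow_le (a : ℕ → ℝ≥0∞) {p : ℝ} (hp : 1 ≤ p) :
    ∑' n, a n ^ p ≤ (∑' n, a n) ^ p := by
  have hp0 : 0 < p := lt_of_lt_of_le one_pos hp
  have hfin : ∀ s : Finset ℕ, ∑ i ∈ s, a i ^ p ≤ (∑ i ∈ s, a i) ^ p := by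
    intro s
    induction s using Finset.cons_induction with
    | empty => simp [ENNReal.zero_rpow_of_pos hp0]
    | cons j s hj ih =>
        rw [Finset.sum_cons, Finset.sum_cons]
        calc a j ^ p + ∑ i ∈ s, a i ^ p ≤ a j ^ p + (∑ i ∈ s, a i) ^ p := by gcongr
          _ ≤ (a j + ∑ i ∈ s, a i) ^ p := ENNReal.add_rpow_le_rpow_add _ _ hp
  rw [ENNReal.tsum_eq_iSup_sum]
  refine iSup_le fun s => (hfin s).trans ?_
  exact ENNReal.rpow_le_rpow (ENNReal.sum_le_tsum s) hp0.le

lemma aux_summable (γ : ℝ) (hγ : 0 < γ) :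
    Summable (fun n : ℕ => ((n : ℝ) + 2) * Real.exp (-((n : ℝ) + 1) ^ γ)) := by
  set m : ℕ := ⌈(4 : ℝ) / γ⌉₊ with hm
  have hfac : (0 : ℝ) < (m.factorial : ℝ) := by exact_mod_cast m.factorial_pos
  have hsum2 : Summable (fun n : ℕ => 2 * (m.factorial : ℝ) * (1 / ((n : ℝ) + 1) ^ 2)) := by
    apply Summable.mul_left
    have := (summable_nat_add_iff (f := fun n : ℕ => 1 / (n : ℝ) ^ 2) 1).2
      (Real.summable_one_div_nat_pow.2 one_lt_two)
    simpa [Nat.cast_add] using this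
  refine Summable.of_nonneg_of_le (fun n => by positivity) (fun n => ?_) hsum2
  have hn0 : (0 : ℝ) < (n : ℝ) + 1 := by positivity
  have hn1 : (1 : ℝ) ≤ (n : ℝ) + 1 := by linarith [Nat.cast_nonneg (α := ℝ) n]
  have hkey : ((n : ℝ) + 1) ^ (4 : ℕ) / (m.factorial : ℝ) ≤ Real.exp (((n : ℝ) + 1) ^ γ) := by
    calc ((n : ℝ) + 1) ^ (4 : ℕ) / (m.factorial : ℝ)
        ≤ (((n : ℝ) + 1) ^ γ) ^ m / (m.factorial : ℝ) := by
          gcongr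
          rw [← Real.rpow_natCast (((n:ℝ)+1) ^ γ) m, ← Real.rpow_natCast ((n:ℝ)+1) 4,
            ← Real.rpow_mul (le_of_lt hn0)]
          apply Real.rpow_le_rpow_of_exponent_le hn1
          have h1 : (4 : ℝ) / γ ≤ (m : ℝ) := Nat.le_ceil _
          rw [div_le_iff₀ hγ] at h1
          push_cast
          linarith
      _ ≤ Real.exp (((n : ℝ) + 1) ^ γ) :=
          Real.pow_div_factorial_le_exp _ (Real.rpow_nonneg (le_of_lt hn0) _) m
  have hexp : Real.exp (-((n : ℝ) + 1) ^ γ) ≤ (m.factorial : ℝ) / ((n : ℝ) + 1) ^ (4 : ℕ) := by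
    rw [Real.exp_neg, inv_le_comm₀ (Real.exp_pos _) (by positivity), inv_div]
    exact hkey
  calc ((n : ℝ) + 2) * Real.exp (-((n : ℝ) + 1) ^ γ)
      ≤ ((n : ℝ) + 2) * ((m.factorial : ℝ) / ((n : ℝ) + 1) ^ (4 : ℕ)) := by
        apply mul_le_mul_of_nonneg_left hexp (by linarith)
      _ ≤ 2 * (m.factorial : ℝ) * (1 / ((n : ℝ) + 1) ^ 2) := by
        rw [mul_div_assoc' , mul_one_div, div_le_div_iff₀ (by positivity) (by positivity)]
        have h1 : ((n:ℝ)+2) ≤ 2*((n:ℝ)+1)^2 := by nlinarith [Nat.cast_nonneg (α := ℝ) n]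
        have h2 : ((n:ℝ)+2)*((n:ℝ)+1)^2 ≤ 2*((n:ℝ)+1)^4 := by
          have := mul_le_mul_of_nonneg_right h1 (sq_nonneg ((n:ℝ)+1))
          nlinarith [this]
        nlinarith [mul_le_mul_of_nonneg_left h2 hfac.le]


/-- If a real random variable `X` satisfies the subweibull(γ) tail bound
`P(|X| > t) ≤ 2 exp(-(t/K)^γ)` for all `t ≥ 0`, then there is a constant `C` depending
only on `γ` such that `(E|X|^p)^{1/p} ≤ C·K·p^{1/γ}` for all `p ≥ max(1, γ)`. -/
theorem subweibull_tail_to_moments (γ : ℝ) (hγ : 0 < γ) :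
    ∃ C : ℝ, 0 < C ∧
      ∀ (Ω : Type) (_ : MeasurableSpace Ω) (μ : Measure Ω), IsProbabilityMeasure μ →
        ∀ (X : Ω → ℝ), Measurable X →
          ∀ K : ℝ, 0 < K →
            (∀ t : ℝ, 0 ≤ t →
              μ {ω | t < |X ω|} ≤ ENNReal.ofReal (2 * Real.exp (-(t / K) ^ γ))) →
            ∀ p : ℝ, max 1 γ ≤ p →
              (∫⁻ ω, ENNReal.ofReal (|X ω| ^ p) ∂μ) ^ (1 / p)
                ≤ ENNReal.ofReal (C * K * p ^ (1 / γ)) := by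
  set b : ℕ → ℝ := fun n => ((n : ℝ) + 2) * Real.exp (-((n : ℝ) + 1) ^ γ) with hb
  have hbpos : ∀ n, 0 < b n := fun n => by
    have : (0:ℝ) < (n:ℝ) + 2 := by positivity
    exact mul_pos this (Real.exp_pos _)
  have hbs : Summable b := aux_summable γ hγ
  set A : ℝ := ∑' n, b n with hA
  have hA0 : 0 ≤ A := tsum_nonneg fun n => (hbpos n).le
  refine ⟨1 + 2 * A, by linarith, ?_⟩
  intro Ω mΩ μ hμ X hX K hK htail p hp
  have hp1 : 1 ≤ p := le_trans (le_max_left _ _) hp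
  have hγp : γ ≤ p := le_trans (le_max_right _ _) hp
  have hp0 : 0 < p := lt_of_lt_of_le one_pos hp1
  set T : ℝ := K * p ^ (1 / γ) with hT
  have hTpos : 0 < T := by
    have := Real.rpow_pos_of_pos hp0 (1 / γ)
    exact mul_pos hK this
  set g : ℕ → Ω → ℝ≥0∞ := fun n =>
    Set.indicator {ω | ((n:ℝ) + 1) * T < |X ω|}
      (fun _ => ENNReal.ofReal ((((n:ℝ) + 2) * T) ^ p)) with hg
  have hSmeas : ∀ c : ℝ, MeasurableSet {ω | c < |X ω|} := fun c =>
    measurableSet_lt measurable_const hX.abs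
  -- pointwise bound
  have hpt : ∀ ω, ENNReal.ofReal (|X ω| ^ p)
      ≤ ENNReal.ofReal (T ^ p) + ∑' n, g n ω := by
    intro ω
    rcases le_or_gt (|X ω|) T with hle | hlt
    · refine le_trans ?_ le_self_add
      exact ENNReal.ofReal_le_ofReal (Real.rpow_le_rpow (abs_nonneg _) hle hp0.le)
    · set q : ℝ := |X ω| / T with hqdef
      have hq1 : 1 < q := (one_lt_div hTpos).2 hlt
      have hq0 : 0 ≤ q := le_of_lt (lt_trans one_pos hq1)
      have hqT : q * T = |X ω| := div_mul_cancel₀ _ hTpos.ne'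
      set c : ℕ := ⌈q⌉₊ with hc
      have hc2 : 2 ≤ c := by
        have : 1 < c := Nat.lt_ceil.mpr (by exact_mod_cast hq1)
        omega
      set k : ℕ := c - 2 with hk
      have hkc : k + 2 = c := by omega
      have hkcast : (k : ℝ) + 2 = (c : ℝ) := by exact_mod_cast congrArg Nat.cast hkc
      have hmem : ω ∈ {ω | ((k:ℝ) + 1) * T < |X ω|} := by
        have h1 : (c : ℝ) < q + 1 := Nat.ceil_lt_add_one hq0
        have h2 : (k : ℝ) + 1 < q := by linarith
        have := mul_lt_mul_of_pos_right h2 hTpos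
        simpa [hqT] using this
      have hbound : |X ω| ^ p ≤ (((k:ℝ) + 2) * T) ^ p := by
        apply Real.rpow_le_rpow (abs_nonneg _) ?_ hp0.le
        have h1 : q ≤ (c : ℝ) := Nat.le_ceil q
        calc |X ω| = q * T := hqT.symm
          _ ≤ (c : ℝ) * T := mul_le_mul_of_nonneg_right h1 hTpos.le
          _ = ((k:ℝ) + 2) * T := by rw [hkcast]
      calc ENNReal.ofReal (|X ω| ^ p) ≤ ENNReal.ofReal ((((k:ℝ) + 2) * T) ^ p) :=
            ENNReal.ofReal_le_ofReal hbound
        _ = g k ω := by rw [hg]; simp [Set.indicator_of_mem hmem]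
        _ ≤ ∑' n, g n ω := ENNReal.le_tsum k
        _ ≤ ENNReal.ofReal (T ^ p) + ∑' n, g n ω := le_add_self
  -- argument of the tail bound
  have harg : ∀ n : ℕ, ((((n:ℝ) + 1) * T) / K) ^ γ = ((n:ℝ) + 1) ^ γ * p := by
    intro n
    have h1 : (((n:ℝ) + 1) * T) / K = ((n:ℝ) + 1) * p ^ (1 / γ) := by
      rw [hT]; field_simp
    rw [h1, Real.mul_rpow (by positivity) (by positivity)]
    congr 1
    rw [← Real.rpow_mul hp0.le, one_div, inv_mul_cancel₀ hγ.ne', Real.rpow_one]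
  -- main integral estimate
  have hmain : (∫⁻ ω, ENNReal.ofReal (|X ω| ^ p) ∂μ)
      ≤ (ENNReal.ofReal ((1 + 2 * A) * K * p ^ (1 / γ))) ^ p := by
    calc (∫⁻ ω, ENNReal.ofReal (|X ω| ^ p) ∂μ)
        ≤ ∫⁻ ω, (ENNReal.ofReal (T ^ p) + ∑' n, g n ω) ∂μ := lintegral_mono hpt
      _ = ENNReal.ofReal (T ^ p)
          + ∑' n : ℕ, ENNReal.ofReal ((((n:ℝ) + 2) * T) ^ p) * μ {ω | ((n:ℝ) + 1) * T < |X ω|} := by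
          rw [lintegral_add_left measurable_const, lintegral_const, measure_univ, mul_one,
            lintegral_tsum (fun n => (measurable_const.indicator (hSmeas _)).aemeasurable)]
          congr 1
          exact tsum_congr fun n => lintegral_indicator_const (hSmeas _) _
      _ ≤ ENNReal.ofReal (T ^ p)
          + ∑' n : ℕ, ENNReal.ofReal ((((n:ℝ) + 2) * T) ^ p)
              * ENNReal.ofReal (2 * Real.exp (-(((n:ℝ) + 1) ^ γ * p))) := by
          gcongr with n
          have := htail (((n:ℝ) + 1) * T) (mul_nonneg (by positivity) hTpos.le)
          rwa [harg n] at this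
      _ = ENNReal.ofReal (T ^ p)
          + ENNReal.ofReal (2 * T ^ p) * ∑' n : ℕ, (ENNReal.ofReal (b n)) ^ p := by
          rw [← ENNReal.tsum_mul_left]
          congr 1
          refine tsum_congr fun n => ?_
          rw [ENNReal.ofReal_rpow_of_pos (hbpos n),
            ← ENNReal.ofReal_mul (by positivity), ← ENNReal.ofReal_mul (by positivity)]
          congr 1
          rw [hb]
          rw [Real.mul_rpow (by positivity) (Real.exp_pos _).le,
            Real.mul_rpow (by positivity) hTpos.le, ← Real.exp_mul]
          ring_nf
      _ ≤ ENNReal.ofReal (T ^ p)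
          + ENNReal.ofReal (2 * T ^ p) * (ENNReal.ofReal A) ^ p := by
          gcongr
          calc ∑' n, (ENNReal.ofReal (b n)) ^ p ≤ (∑' n, ENNReal.ofReal (b n)) ^ p :=
              aux_tsum_rpow_le _ hp1
            _ = (ENNReal.ofReal A) ^ p := by
              rw [← ENNReal.ofReal_tsum_of_nonneg (fun n => (hbpos n).le) hbs]
      _ ≤ (ENNReal.ofReal ((1 + 2 * A) * K * p ^ (1 / γ))) ^ p := by
          have hTe : (1 + 2 * A) * K * p ^ (1 / γ) = (1 + 2 * A) * T := by rw [hT]; ring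
          have h1 : ENNReal.ofReal (T ^ p) = (ENNReal.ofReal T) ^ p :=
            (ENNReal.ofReal_rpow_of_pos hTpos).symm
          have hR : (ENNReal.ofReal ((1 + 2 * A) * T)) ^ p
              = (ENNReal.ofReal (1 + 2 * A)) ^ p * (ENNReal.ofReal T) ^ p := by
            rw [ENNReal.ofReal_mul (by linarith), ENNReal.mul_rpow_of_nonneg _ _ hp0.le]
          rw [hTe, hR]
          have h2 : (1 : ℝ≥0∞) + 2 * (ENNReal.ofReal A) ^ p
              ≤ (ENNReal.ofReal (1 + 2 * A)) ^ p := by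
            have e1 : ENNReal.ofReal (1 + 2 * A) = 1 + 2 * ENNReal.ofReal A := by
              rw [ENNReal.ofReal_add zero_le_one (by linarith), ENNReal.ofReal_one,
                ENNReal.ofReal_mul (by norm_num), ENNReal.ofReal_ofNat]
            rw [e1]
            calc (1 : ℝ≥0∞) + 2 * (ENNReal.ofReal A) ^ p
                ≤ 1 ^ p + (2 * ENNReal.ofReal A) ^ p := by
                  rw [ENNReal.one_rpow, ENNReal.mul_rpow_of_nonneg _ _ hp0.le]
                  gcongr
                  calc (2:ℝ≥0∞) = 2 ^ (1:ℝ) := (ENNReal.rpow_one 2).symm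
                    _ ≤ 2 ^ p := ENNReal.rpow_le_rpow_of_exponent_le one_le_two hp1
              _ ≤ (1 + 2 * ENNReal.ofReal A) ^ p :=
                  ENNReal.add_rpow_le_rpow_add _ _ hp1
          calc ENNReal.ofReal (T ^ p)
              + ENNReal.ofReal (2 * T ^ p) * (ENNReal.ofReal A) ^ p
              = (1 + 2 * (ENNReal.ofReal A) ^ p) * (ENNReal.ofReal T) ^ p := by
                rw [ENNReal.ofReal_mul (by norm_num : (0:ℝ) ≤ 2), h1, ENNReal.ofReal_ofNat]
                ring
            _ ≤ (ENNReal.ofReal (1 + 2 * A)) ^ p * (ENNReal.ofReal T) ^ p := by gcongr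
  -- take p-th roots
  have := ENNReal.rpow_le_rpow hmain (by positivity : (0:ℝ) ≤ 1 / p)
  rwa [← ENNReal.rpow_mul, mul_one_div, div_self hp0.ne', ENNReal.rpow_one] at this
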